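/- Let n ≥ 1 and let V be an n-dimensional 𝕁-isotropic complex subspace of ℂ^(2n+1). Then there exist vectors v_1, …, v_n forming a basis of V, and vectors w_1, …, w_n, u in ℂ^(2n+1), such that (v_1, …, v_n, w_1, …, w_n, u) is a basis of ℂ^(2n+1) and h(v_i, v_j) = 0, h(v_i, w_j) = δ_ij, h(w_i, w_j) = 0, h(v_i, u) = 0, h(w_i, u) = 0, and h(u, u) = 1 for all 1 ≤ i, j ≤ n. -/

import Mathlib

/-!
Take a basis `v` of `V`. Since `𝕁` is invertible, `v` has an `h`-dual family `w'`, and subtracting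
`½ ∑ₖ h(w'ₖ, w'ⱼ) vₖ` from `w'ⱼ` makes the dual family isotropic. The `2n` functionals `h(vᵢ, ·)`,
`h(wᵢ, ·)` have a common nonzero zero `u'` in the `(2n+1)`-dimensional space, and pairing with `w`
and `v` shows that `(v, w, u')` is a basis. The Gram matrix of `(v, u', w)` is `𝕁` with its middle
entry replaced by `h(u', u')`; comparing determinants gives `h(u', u') = |det P|²` for the matrix
`P` of that basis, so `u := (det P)⁻¹ • u'` has `h(u, u) = 1`.
-/

open Matrix

noncomputable section

/-- Index type for `ℂ^(2n+1)`: `Fin n ⊕ Fin 1 ⊕ Fin n`. -/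
abbrev Idx (n : ℕ) := Fin n ⊕ Fin 1 ⊕ Fin n

/-- The Hermitian matrix `𝕁` whose 3×3 block form has the `n×n` identity in blocks
(1,3) and (3,1), the entry `1` in the middle (2,2) position, and zeros elsewhere. -/
def Jmat (n : ℕ) : Matrix (Idx n) (Idx n) ℂ :=
  Matrix.of fun i j =>
    match i, j with
    | Sum.inl a, Sum.inr (Sum.inr b) => if a = b then 1 else 0
    | Sum.inr (Sum.inr a), Sum.inl b => if a = b then 1 else 0
    | Sum.inr (Sum.inl _), Sum.inr (Sum.inl _) => 1
    | _, _ => 0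

/-- The Hermitian form `h(x,y) = (star x) ⬝ᵥ (𝕁 *ᵥ y)`, conjugate-linear in the
first argument. -/
def hform {n : ℕ} (x y : Idx n → ℂ) : ℂ := star x ⬝ᵥ (Jmat n *ᵥ y)

/-- A subspace `V ⊆ ℂ^(2n+1)` is `𝕁`-isotropic if `h(x,y) = 0` for all `x, y ∈ V`. -/
def IsIsotropic {n : ℕ} (V : Submodule ℂ (Idx n → ℂ)) : Prop :=
  ∀ x ∈ V, ∀ y ∈ V, hform x y = 0

namespace LinearMap

variable {K M ι κ : Type*} [Field K] [StarRing K] [AddCommGroup M] [Module K M]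

theorem linearIndependent_sum_elim_of_dual [DecidableEq ι] (B : M →ₗ⋆[K] M →ₗ[K] K)
    {f g : ι → M} (hfg : ∀ i j, B (g i) (f j) = if i = j then 1 else 0)
    {u : κ → M} (hu : LinearIndependent K u) (hgu : ∀ i k, B (g i) (u k) = 0) :
    LinearIndependent K (Sum.elim f u) := by
  let φ : M →ₗ[K] ι → K := LinearMap.pi fun i => B (g i)
  have hφf : LinearIndependent K (φ ∘ f) := by
    convert Pi.linearIndependent_single_one ι K with j
    ext i
    simp [φ, hfg, Pi.single_apply]
  refine hφf.of_comp.sum_type hu ((Submodule.range_ker_disjoint hφf).mono_right ?_)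
  rw [Submodule.span_le]
  rintro _ ⟨k, rfl⟩
  ext i
  simp [φ, hgu]

theorem exists_ne_zero_forall_apply_eq_zero [Fintype ι] [FiniteDimensional K M]
    (B : M →ₗ⋆[K] M →ₗ[K] K) (f : ι → M) (hcard : Fintype.card ι < Module.finrank K M) :
    ∃ u ≠ 0, ∀ i, B (f i) u = 0 := by
  let φ : M →ₗ[K] ι → K := LinearMap.pi fun i => B (f i)
  have hker : LinearMap.ker φ ≠ ⊥ :=
    ker_ne_bot_of_finrank_lt (by rwa [Module.finrank_fintype_fun_eq_card])
  obtain ⟨u, hu, hu0⟩ := Submodule.exists_mem_ne_zero_of_ne_bot hker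
  exact ⟨u, hu0, fun i => congrFun hu i⟩

theorem IsSymm.exists_isotropic_dual [Fintype ι] [DecidableEq ι] [NeZero (2 : K)]
    {B : M →ₗ⋆[K] M →ₗ[K] K} (hB : B.IsSymm)
    {v w' : ι → M} (hvv : ∀ i j, B (v i) (v j) = 0)
    (hvw' : ∀ i j, B (v i) (w' j) = if i = j then 1 else 0) :
    ∃ w : ι → M, (∀ i j, B (v i) (w j) = if i = j then 1 else 0) ∧
      ∀ i j, B (w i) (w j) = 0 := by
  have hw'v : ∀ i k, B (w' i) (v k) = if k = i then 1 else 0 := fun i k => by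
    rw [← hB.eq, hvw']; split_ifs <;> simp
  refine ⟨fun j => w' j - ∑ k, (B (w' k) (w' j) / 2) • v k, fun i j => by simp [hvw', hvv],
    fun i j => ?_⟩
  simp [hvw', hvv, hw'v, hB.eq, map_ofNat, sub_sub, add_halves]

end LinearMap

theorem Matrix.mulVec_surjective_of_linearIndependent_row {K m n : Type*} [Field K] [Fintype m]
    [Fintype n] {A : Matrix m n K} (hA : LinearIndependent K A.row) :
    Function.Surjective A.mulVec := by
  have : LinearMap.range A.mulVecLin = ⊤ := Submodule.eq_top_of_finrank_eq <| by
    rw [← Matrix.rank, hA.rank_matrix, Module.finrank_fintype_fun_eq_card]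
  exact LinearMap.range_eq_top.1 this

def idxSwap (n : ℕ) : Idx n → Idx n :=
  Sum.elim (Sum.inr ∘ Sum.inr) (Sum.elim (Sum.inr ∘ Sum.inl) Sum.inl)

lemma idxSwap_involutive (n : ℕ) : Function.Involutive (idxSwap n) := by
  rintro (a | b | c) <;> rfl

lemma Jmat_eq_permMatrix (n : ℕ) :
    Jmat n = ((idxSwap_involutive n).toPerm).permMatrix ℂ := by
  ext (a | b | c) (a' | b' | c') <;>
    simp [Jmat, idxSwap, PEquiv.toMatrix_apply, eq_comm, Fin.fin_one_eq_zero]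

lemma Jmat_conjTranspose (n : ℕ) : (Jmat n)ᴴ = Jmat n := by
  rw [Jmat_eq_permMatrix, conjTranspose_permMatrix, Equiv.Perm.inv_def,
    Function.Involutive.toPerm_symm]

lemma Jmat_mulVec_Jmat_mulVec (n : ℕ) (x : Idx n → ℂ) : Jmat n *ᵥ (Jmat n *ᵥ x) = x := by
  rw [Jmat_eq_permMatrix, PEquiv.toMatrix_toPEquiv_mulVec, PEquiv.toMatrix_toPEquiv_mulVec]
  funext k
  simp [idxSwap_involutive n k]

lemma det_Jmat_ne_zero (n : ℕ) : (Jmat n).det ≠ 0 := by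
  rw [Jmat_eq_permMatrix, det_permutation]
  simp

section hform

variable {n : ℕ}

lemma hform_add_left (x x' y : Idx n → ℂ) : hform (x + x') y = hform x y + hform x' y := by
  simp [hform, add_dotProduct]

lemma hform_smul_left (c : ℂ) (x y : Idx n → ℂ) : hform (c • x) y = star c * hform x y := by
  simp [hform, smul_dotProduct]

lemma hform_add_right (x y y' : Idx n → ℂ) : hform x (y + y') = hform x y + hform x y' := by
  simp [hform, mulVec_add, dotProduct_add]

lemma hform_smul_right (c : ℂ) (x y : Idx n → ℂ) : hform x (c • y) = c * hform x y := by
  simp [hform, mulVec_smul, dotProduct_smul]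

def hformₛₗ (n : ℕ) : (Idx n → ℂ) →ₗ⋆[ℂ] (Idx n → ℂ) →ₗ[ℂ] ℂ :=
  LinearMap.mk₂'ₛₗ (starRingEnd ℂ) (RingHom.id ℂ) hform hform_add_left hform_smul_left
    hform_add_right hform_smul_right

@[simp]
lemma hformₛₗ_apply (x y : Idx n → ℂ) : hformₛₗ n x y = hform x y := rfl

lemma isSymm_hformₛₗ (n : ℕ) : (hformₛₗ n).IsSymm := by
  refine LinearMap.isSymm_def.2 fun x y => ?_
  simp only [hformₛₗ_apply, hform]
  rw [starRingEnd_apply, star_dotProduct, star_star, star_mulVec, Jmat_conjTranspose,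
    dotProduct_mulVec]

lemma exists_hform_dual {m : Type*} [Fintype m] [DecidableEq m] (v : m → Idx n → ℂ)
    (hv : LinearIndependent ℂ v) :
    ∃ w' : m → Idx n → ℂ, ∀ i j, hform (v i) (w' j) = if i = j then 1 else 0 := by
  choose z hz using fun j => Matrix.mulVec_surjective_of_linearIndependent_row
    (A := Matrix.of v) hv (Pi.single j 1)
  refine ⟨fun j => Jmat n *ᵥ star (z j), fun i j => ?_⟩
  have hvz : v i ⬝ᵥ z j = (Pi.single j 1 : m → ℂ) i := congrFun (hz j) i
  rw [hform, Jmat_mulVec_Jmat_mulVec, star_dotProduct_star, dotProduct_comm, hvz]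
  by_cases h : i = j <;> simp [h]

def hformGram {ι : Type*} (f : ι → Idx n → ℂ) : Matrix ι ι ℂ :=
  Matrix.of fun a b => hform (f a) (f b)

lemma hformGram_eq {ι : Type*} [Fintype ι] (f : ι → Idx n → ℂ) :
    hformGram f = (Matrix.of f)ᵀᴴ * Jmat n * (Matrix.of f)ᵀ := by
  ext a b
  simp only [hformGram, hform, Matrix.mul_apply, dotProduct, mulVec, Finset.mul_sum, Finset.sum_mul,
    of_apply, transpose_apply, conjTranspose_apply, Pi.star_apply, mul_assoc]
  exact Finset.sum_comm

lemma det_hformGram (f : Idx n → Idx n → ℂ) :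
    (hformGram f).det = star (Matrix.of f).det * (Matrix.of f).det * (Jmat n).det := by
  rw [hformGram_eq, det_mul, det_mul, det_conjTranspose, det_transpose]
  ring

lemma hform_eq_ite_comm {ι : Type*} [DecidableEq ι] {v w : ι → Idx n → ℂ}
    (hvw : ∀ i j, hform (v i) (w j) = if i = j then 1 else 0) (i j : ι) :
    hform (w i) (v j) = if i = j then 1 else 0 := by
  rw [← hformₛₗ_apply, ← (isSymm_hformₛₗ n).eq, hformₛₗ_apply, hvw]
  by_cases h : i = j <;> simp [h, eq_comm]

lemma hform_eq_zero_comm {x y : Idx n → ℂ} : hform x y = 0 ↔ hform y x = 0 :=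
  (isSymm_hformₛₗ n).eq_iff

structure IsWittFamily {ι : Type*} [DecidableEq ι] (v w : ι → Idx n → ℂ) (u : Idx n → ℂ) :
    Prop where
  vv : ∀ i j, hform (v i) (v j) = 0
  vw : ∀ i j, hform (v i) (w j) = if i = j then 1 else 0
  ww : ∀ i j, hform (w i) (w j) = 0
  vu : ∀ i, hform (v i) u = 0
  wu : ∀ i, hform (w i) u = 0

namespace IsWittFamily

variable {u : Idx n → ℂ}

lemma linearIndependent {ι : Type*} [DecidableEq ι] {v w : ι → Idx n → ℂ}
    (h : IsWittFamily v w u) (hu : u ≠ 0) :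
    LinearIndependent ℂ (Sum.elim v (Sum.elim w fun _ : Fin 1 => u)) := by
  have hwv := hform_eq_ite_comm h.vw
  have hind := LinearMap.linearIndependent_sum_elim_of_dual (hformₛₗ n) (f := Sum.elim v w)
    (g := Sum.elim w v) (u := fun _ : Fin 1 => u)
    (by rintro (i | i) (j | j) <;> simp [h.vv, h.vw, h.ww, hwv])
    (linearIndependent_unique_iff.2 hu) (by rintro (i | i) k <;> simp [h.vu, h.wu])
  have hassoc : Sum.elim v (Sum.elim w fun _ : Fin 1 => u) =
      Sum.elim (Sum.elim v w) (fun _ : Fin 1 => u) ∘ (Equiv.sumAssoc _ _ _).symm := by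
    ext (i | i | i) <;> rfl
  rw [hassoc]
  exact hind.comp _ (Equiv.injective _)

lemma hformGram_sum_elim {v w : Fin n → Idx n → ℂ} (h : IsWittFamily v w u) :
    hformGram (Sum.elim v (Sum.elim (fun _ : Fin 1 => u) w)) =
      Jmat n * diagonal (Sum.elim 1 (Sum.elim (fun _ => hform u u) 1)) := by
  have hwv := hform_eq_ite_comm h.vw
  have huv i : hform u (v i) = 0 := hform_eq_zero_comm.1 (h.vu i)
  have huw i : hform u (w i) = 0 := hform_eq_zero_comm.1 (h.wu i)
  ext (a | b | c) (a' | b' | c') <;>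
    simp [hformGram, mul_diagonal, Jmat, h.vv, h.vw, h.ww, hwv, h.vu, h.wu, huv, huw]

lemma exists_hform_self_eq_star_mul_self {v w : Fin n → Idx n → ℂ} (h : IsWittFamily v w u)
    (hu : u ≠ 0) : ∃ δ : ℂ, δ ≠ 0 ∧ hform u u = star δ * δ := by
  set F := Sum.elim v (Sum.elim (fun _ : Fin 1 => u) w)
  have hF : LinearIndependent ℂ F := by
    have hperm : F = Sum.elim v (Sum.elim w fun _ : Fin 1 => u) ∘
        Equiv.sumCongr (Equiv.refl _) (Equiv.sumComm _ _) := by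
      ext (i | i | i) <;> rfl
    rw [hperm]
    exact (h.linearIndependent hu).comp _ (Equiv.injective _)
  refine ⟨(Matrix.of F).det, (Matrix.isUnit_iff_isUnit_det _).1
    (Matrix.linearIndependent_rows_iff_isUnit.1 hF) |>.ne_zero, ?_⟩
  have hdet := det_hformGram F
  rw [h.hformGram_sum_elim, det_mul, det_diagonal] at hdet
  simp only [Fintype.prod_sum_type, Finset.univ_unique, Finset.prod_singleton, Pi.one_apply,
    Finset.prod_const_one, Sum.elim_inl, Sum.elim_inr, one_mul, mul_one] at hdet
  rw [mul_comm] at hdet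
  exact mul_right_cancel₀ (det_Jmat_ne_zero n) hdet

lemma exists_hform_self_eq_one {v w : Fin n → Idx n → ℂ} (h : IsWittFamily v w u)
    (hu : u ≠ 0) : ∃ u₁, IsWittFamily v w u₁ ∧ hform u₁ u₁ = 1 := by
  obtain ⟨δ, hδ, huu⟩ := h.exists_hform_self_eq_star_mul_self hu
  refine ⟨δ⁻¹ • u, ⟨h.vv, h.vw, h.ww, fun i => ?_, fun i => ?_⟩, ?_⟩ <;>
    simp [hform_smul_left, hform_smul_right, h.vu, h.wu, huu, hδ]

end IsWittFamily

end hform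

lemma Submodule.exists_fin_linearIndependent_span_eq {K E : Type*} [Field K] [AddCommGroup E]
    [Module K E] [FiniteDimensional K E] (V : Submodule K E) {n : ℕ} (hV : Module.finrank K V = n) :
    ∃ v : Fin n → E, (∀ i, v i ∈ V) ∧ LinearIndependent K v ∧ span K (Set.range v) = V := by
  let b := Module.finBasisOfFinrankEq K V hV
  refine ⟨fun i => b i, fun i => (b i).2, b.linearIndependent.map' V.subtype V.ker_subtype, ?_⟩
  rw [show (fun i => (b i : E)) = V.subtype ∘ b from rfl, Set.range_comp, span_image, b.span_eq,
    map_subtype_top]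

theorem exists_adapted_basis_general (n : ℕ)
    (V : Submodule ℂ (Idx n → ℂ))
    (hVrk : Module.finrank ℂ V = n) (hV : IsIsotropic V) :
    ∃ (v w : Fin n → Idx n → ℂ) (u : Idx n → ℂ),
      (∀ i, v i ∈ V) ∧ LinearIndependent ℂ v ∧
      Submodule.span ℂ (Set.range v) = V ∧
      LinearIndependent ℂ (Sum.elim v (Sum.elim w (fun _ : Fin 1 => u))) ∧
      Submodule.span ℂ (Set.range (Sum.elim v (Sum.elim w (fun _ : Fin 1 => u)))) = ⊤ ∧
      (∀ i j, hform (v i) (v j) = 0) ∧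
      (∀ i j, hform (v i) (w j) = if i = j then 1 else 0) ∧
      (∀ i j, hform (w i) (w j) = 0) ∧
      (∀ i, hform (v i) u = 0) ∧
      (∀ i, hform (w i) u = 0) ∧
      hform u u = 1 := by
  obtain ⟨v, hvV, hv, hspan⟩ := V.exists_fin_linearIndependent_span_eq hVrk
  have hvv i j : hform (v i) (v j) = 0 := hV _ (hvV i) _ (hvV j)
  obtain ⟨w', hvw'⟩ := exists_hform_dual v hv
  obtain ⟨w, hvw, hww⟩ := (isSymm_hformₛₗ n).exists_isotropic_dual hvv hvw'
  obtain ⟨u', hu', hvwu'⟩ := (hformₛₗ n).exists_ne_zero_forall_apply_eq_zero (Sum.elim v w)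
    (by simp [Module.finrank_fintype_fun_eq_card])
  obtain ⟨u, hW, huu⟩ := IsWittFamily.exists_hform_self_eq_one
    ⟨hvv, hvw, hww, fun i => hvwu' (.inl i), fun i => hvwu' (.inr i)⟩ hu'
  have hind := hW.linearIndependent fun h => by simp [h, hform] at huu
  refine ⟨v, w, u, hvV, hv, hspan, hind, hind.span_eq_top_of_card_eq_finrank ?_, hW.vv, hW.vw,
    hW.ww, hW.vu, hW.wu, huu⟩
  simp [Module.finrank_fintype_fun_eq_card]
  omega

/-- an adapted pseudo-unitary basis for an `n`-dimensional
`𝕁`-isotropic subspace `V` of `ℂ^(2n+1)`. -/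
theorem exists_adapted_basis (n : ℕ) (hn : 1 ≤ n)
    (V : Submodule ℂ (Idx n → ℂ))
    (hVrk : Module.finrank ℂ V = n) (hV : IsIsotropic V) :
    ∃ (v w : Fin n → Idx n → ℂ) (u : Idx n → ℂ),
      (∀ i, v i ∈ V) ∧ LinearIndependent ℂ v ∧
      Submodule.span ℂ (Set.range v) = V ∧
      LinearIndependent ℂ (Sum.elim v (Sum.elim w (fun _ : Fin 1 => u))) ∧
      Submodule.span ℂ (Set.range (Sum.elim v (Sum.elim w (fun _ : Fin 1 => u)))) = ⊤ ∧
      (∀ i j, hform (v i) (v j) = 0) ∧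
      (∀ i j, hform (v i) (w j) = if i = j then 1 else 0) ∧
      (∀ i j, hform (w i) (w j) = 0) ∧
      (∀ i, hform (v i) u = 0) ∧
      (∀ i, hform (w i) u = 0) ∧
      hform u u = 1 :=
  exists_adapted_basis_general n V hVrk hV
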